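/- Every locally stratified constraint logic program P has a unique perfect model M(P). -/

import Mathlib

namespace CLP

/-! ### The set `W` of countable ordinals -/

/-- `W` : the set of countable ordinals. -/
abbrev W : Type 1 := {o : Ordinal.{0} // o < (Cardinal.aleph 1).ord}

theorem natW_lt (n : ℕ) : (n : Ordinal.{0}) < (Cardinal.aleph 1).ord := by
  refine Cardinal.lt_ord.mpr ?_
  simpa using (Cardinal.nat_lt_aleph0 n).trans Cardinal.aleph0_lt_aleph_one

/-- natural numbers as countable ordinals -/
def natW (n : ℕ) : W := ⟨n, natW_lt n⟩

/-- the zero ordinal as an element of `W` -/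
def zeroW : W := natW 0

theorem succW_lt {o : Ordinal.{0}} (h : o < (Cardinal.aleph 1).ord) :
    o + 1 < (Cardinal.aleph 1).ord := by
  have hlim : Order.IsSuccLimit (Cardinal.aleph 1).ord :=
    Cardinal.isSuccLimit_ord (Cardinal.aleph0_le_aleph 1)
  exact hlim.add_one_lt h

/-- the successor operation on countable ordinals (`σ(A) + 1`) -/
def succW (o : W) : W := ⟨o.1 + 1, succW_lt o.2⟩

/-! ### Syntax and semantics of constraint logic programs

Atoms, constraints, and clauses are represented semantically: an atom with variables
in `V` is a user-defined predicate symbol (from `Pu`) together with the function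
mapping each valuation `v : V → D` to the tuple of values of its argument terms, and a
constraint is represented by its satisfaction predicate on valuations (the
interpretation `𝒟` for the constraints, with carrier `D`, is thereby fixed). -/

/-- An atom: a user-defined predicate symbol together with its (semantically
represented) tuple of argument terms. -/
structure SAtm (V D Pu : Type) where
  pred : Pu
  args : (V → D) → List D

/-- Ground atoms: the base `B_𝒟` is `{p(d₁,…,dₙ) | p ∈ Pred_u, dᵢ ∈ D}`. -/
abbrev GrAtm (Pu D : Type) := Pu × List D

variable {V D Pu : Type}

/-- the ground atom `v(A)` obtained by applying the valuation `v` to the atom `A` -/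
def SAtm.eval (A : SAtm V D Pu) (v : V → D) : GrAtm Pu D := (A.pred, A.args v)

/-- A clause `H ← c ∧ L₁ ∧ … ∧ Lₘ`: a head atom `H`, a constraint `c`, and a body,
i.e. a list of literals; a literal is a pair of a sign (`true` = positive literal `A`,
`false` = negative literal `¬A`) and an atom. -/
structure SClause (V D Pu : Type) where
  head : SAtm V D Pu
  constr : (V → D) → Prop
  body : List (Bool × SAtm V D Pu)

/-- A constraint logic program: a set of clauses (finiteness is stated separately). -/
abbrev SProg (V D Pu : Type) := Set (SClause V D Pu)

/-- truth of a ground literal in a `D`-interpretation `I` -/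
def litTrue (I : Set (GrAtm Pu D)) (l : Bool × GrAtm Pu D) : Prop :=
  if l.1 then l.2 ∈ I else l.2 ∉ I

/-- truth of the ground instance `v(γ)` of the clause `γ` in the `D`-interpretation `I` -/
def SClause.groundTrue (γ : SClause V D Pu) (I : Set (GrAtm Pu D)) (v : V → D) : Prop :=
  γ.constr v → (∀ l ∈ γ.body, litTrue I (l.1, l.2.eval v)) → γ.head.eval v ∈ I

/-- `I` is a `D`-model of the program `P` -/
def isModel (I : Set (GrAtm Pu D)) (P : SProg V D Pu) : Prop :=
  ∀ γ ∈ P, ∀ v, γ.groundTrue I v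

/-- the ground instance `v(γ)` of the clause `γ` is locally stratified w.r.t. `σ` -/
def SClause.locStrat (σ : GrAtm Pu D → W) (γ : SClause V D Pu) (v : V → D) : Prop :=
  γ.constr v → ∀ l ∈ γ.body,
    (l.1 = true → σ (l.2.eval v) ≤ σ (γ.head.eval v)) ∧
    (l.1 = false → σ (l.2.eval v) < σ (γ.head.eval v))

/-- `P` is locally stratified w.r.t. the local stratification `σ : B_𝒟 → W` -/
def locStratWrt (σ : GrAtm Pu D → W) (P : SProg V D Pu) : Prop :=
  ∀ γ ∈ P, ∀ v, γ.locStrat σ v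

/-- `P` is locally stratified -/
def LocallyStratified (P : SProg V D Pu) : Prop := ∃ σ, locStratWrt σ P

/-- `I ≺ J` : `I` is preferable to `J` w.r.t. the local stratification `σ` -/
def pref (σ : GrAtm Pu D → W) (I J : Set (GrAtm Pu D)) : Prop :=
  ∀ A₁ ∈ I \ J, ∃ A₂ ∈ J \ I, σ A₂ < σ A₁

/-- `M` is a perfect model of `P` w.r.t. the local stratification `σ`:
a `D`-model preferable to every other `D`-model of `P` -/
def PerfectModelWrt (σ : GrAtm Pu D → W) (P : SProg V D Pu) (M : Set (GrAtm Pu D)) : Prop :=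
  isModel M P ∧ ∀ N, isModel N P → N ≠ M → pref σ M N

/-- `M` is a perfect model of `P` (w.r.t. some local stratification for `P`) -/
def IsPerfectModel (P : SProg V D Pu) (M : Set (GrAtm Pu D)) : Prop :=
  ∃ σ, locStratWrt σ P ∧ PerfectModelWrt σ P M

/-! ### Predicate dependencies -/

/-- the predicate `p` immediately depends on the predicate `q` in `P` -/
def immDep (P : SProg V D Pu) (p q : Pu) : Prop :=
  ∃ γ ∈ P, γ.head.pred = p ∧ ∃ l ∈ γ.body, (l.2).pred = q

/-- the predicate `p` depends on the predicate `q` in `P` -/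
def dependsOn (P : SProg V D Pu) : Pu → Pu → Prop := Relation.TransGen (immDep P)

/-- `Def(p, P)` : the definition of the predicate `p` in `P` -/
def DefOf (p : Pu) (P : SProg V D Pu) : SProg V D Pu := {γ ∈ P | γ.head.pred = p}

/-! ### Proof trees -/

/-- Finite trees whose internal nodes are ground atoms; the children of a node are
either subtrees (corresponding to positive literals) or leaves labelled by a ground
atom `B` (corresponding to negative literals `¬B`). A node with the empty list of
children is a node whose unique child is the empty conjunction `true`. -/
inductive PT (Pu D : Type) : Type where
  | node (A : GrAtm Pu D) (children : List (PT Pu D ⊕ GrAtm Pu D)) : PT Pu D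

/-- the ground atom at the root of a tree -/
def PT.root : PT Pu D → GrAtm Pu D
  | .node A _ => A

/-- the ground literal corresponding to a child of a node of a tree -/
def childLit : PT Pu D ⊕ GrAtm Pu D → Bool × GrAtm Pu D
  | .inl t => (true, t.root)
  | .inr B => (false, B)

/-- Validity of a tree w.r.t. a program `P` and an "oracle" `O` for the negative
leaves: each node `A` with children `L₁,…,Lᵣ` must be obtained from a ground instance
`A ← c ∧ L₁ ∧ … ∧ Lᵣ` (with `𝒟 ⊨ c`) of a clause of `P`, and every negative leaf
`¬B` must satisfy `O B`. -/
inductive PT.ValidW (P : SProg V D Pu) (O : GrAtm Pu D → Prop) : PT Pu D → Prop where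
  | node {A : GrAtm Pu D} {cs : List (PT Pu D ⊕ GrAtm Pu D)}
      (hc : ∃ γ ∈ P, ∃ v, γ.constr v ∧ γ.head.eval v = A ∧
        γ.body.map (fun l => (l.1, l.2.eval v)) = cs.map childLit)
      (hpos : ∀ t, Sum.inl t ∈ cs → PT.ValidW P O t)
      (hneg : ∀ B, Sum.inr B ∈ cs → O B) :
      PT.ValidW P O (.node A cs)

/-- `HasPTAux σ P α A` holds iff there is a proof tree for `A` and `P`, where a
negative leaf `¬B` is allowed only if there is no proof tree for `B` and `P` among
the proof trees for ground atoms of stratum `< α`. -/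
def HasPTAux (σ : GrAtm Pu D → W) (P : SProg V D Pu) (α : W) (A : GrAtm Pu D) : Prop :=
  ∃ T : PT Pu D, T.root = A ∧
    PT.ValidW P (fun B => ∀ _hlt : σ B < α, ¬ HasPTAux σ P (σ B) B) T
termination_by α.1
decreasing_by exact _hlt

/-- there exists a proof tree for the ground atom `A` and the program `P` -/
def HasProofTree (σ : GrAtm Pu D → W) (P : SProg V D Pu) (A : GrAtm Pu D) : Prop :=
  HasPTAux σ P (σ A) A

/-- `T` is a proof tree for the ground atom `A` and the program `P` -/
def IsProofTree (σ : GrAtm Pu D → W) (P : SProg V D Pu) (A : GrAtm Pu D) (T : PT Pu D) : Prop :=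
  T.root = A ∧
    PT.ValidW P (fun B => ∀ _hlt : σ B < σ A, ¬ HasPTAux σ P (σ B) B) T

/-! ### The measure `μ` -/

mutual
  /-- `size(T)` : the number of atoms occurring at non-leaf nodes of `T` -/
  inductive PT.HasSize : PT Pu D → ℕ → Prop where
    | node {A cs n} : ChildrenSize cs n → PT.HasSize (.node A cs) (1 + n)
  /-- total size of the subtrees among a list of children -/
  inductive ChildrenSize : List (PT Pu D ⊕ GrAtm Pu D) → ℕ → Prop where
    | nil : ChildrenSize [] 0
    | inl {t cs n m} : PT.HasSize t n → ChildrenSize cs m →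
        ChildrenSize (Sum.inl t :: cs) (n + m)
    | inr {B cs m} : ChildrenSize cs m → ChildrenSize (Sum.inr B :: cs) m
end

/-- the (non-strict) lexicographic ordering `≤_lex` on `W × ℕ` -/
def wnLE (a b : W × ℕ) : Prop := a.1 < b.1 ∨ (a.1 = b.1 ∧ a.2 ≤ b.2)

/-- the strict lexicographic ordering `<_lex` on `W × ℕ` -/
def wnLT (a b : W × ℕ) : Prop := a.1 < b.1 ∨ (a.1 = b.1 ∧ a.2 < b.2)

/-- `⟨α₁,m₁⟩ ⊕ ⟨α₂,m₂⟩ = ⟨max(α₁,α₂), m₁+m₂⟩` -/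
noncomputable def oplus (a b : W × ℕ) : W × ℕ := (max a.1 b.1, a.2 + b.2)

/-- `μ(A,P) = min_lex {⟨σ(A), size(T)⟩ | T is a proof tree for A and P}`:
`muAtomIs σ P A m` states that `μ(A,P)` is defined and equal to `m`. -/
def muAtomIs (σ : GrAtm Pu D → W) (P : SProg V D Pu) (A : GrAtm Pu D) (m : W × ℕ) : Prop :=
  (∃ (T : PT Pu D) (sz : ℕ), IsProofTree σ P A T ∧ T.HasSize sz ∧ m = (σ A, sz)) ∧
  (∀ (T : PT Pu D) (sz : ℕ), IsProofTree σ P A T → T.HasSize sz → wnLE m (σ A, sz))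

/-- `μ` on ground literals: `μ(A,P)` for an atom, `⟨σ(A),0⟩` for a negated atom `¬A` -/
def muLitIs (σ : GrAtm Pu D → W) (P : SProg V D Pu) :
    Bool × GrAtm Pu D → W × ℕ → Prop
  | (true, A), m => muAtomIs σ P A m
  | (false, A), m => m = (σ A, 0)

/-- `μ(L₁ ∧ … ∧ Lₙ, P) = μ(L₁,P) ⊕ … ⊕ μ(Lₙ,P)` -/
inductive muGoalIs (σ : GrAtm Pu D → W) (P : SProg V D Pu) :
    List (Bool × GrAtm Pu D) → W × ℕ → Prop where
  | nil : muGoalIs σ P [] (zeroW, 0)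
  | cons {l G m mg} : muLitIs σ P l m → muGoalIs σ P G mg →
      muGoalIs σ P (l :: G) (oplus m mg)

end CLP

/-!
Fix a local stratification `σ₀` and let `M` be the set of atoms having a proof tree, i.e.
`{A | HasProofTree σ₀ P A}`. Since a negative leaf `¬B` of a tree for `A` always has
`σ₀ B < σ₀ A`, `M` is stable: `A ∈ M` iff `A` has a tree whose negative leaves lie
outside `M`.

A stable set is a model. It is also preferable to every model `N`, for every local
stratification `σ`: follow a tree for `A ∈ M \ N` down through nodes outside `N`; since `N`
is a model, this path ends at a negative leaf `¬B` with `B ∈ N \ M`, and `σ` does not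
increase along positive edges and strictly decreases at negative ones. Finally, `≺` is
antisymmetric because `σ` takes values in a well-order, so perfect models are unique.
-/

namespace CLP

variable {V D Pu : Type}

/-- Stable models in the sense of Gelfond and Lifschitz, phrased through proof trees. -/
def IsStable (P : SProg V D Pu) (M : Set (GrAtm Pu D)) : Prop :=
  ∀ A, A ∈ M ↔ ∃ T : PT Pu D, T.root = A ∧ PT.ValidW P (· ∉ M) T

theorem PT.ValidW.mono {P : SProg V D Pu} {O O' : GrAtm Pu D → Prop}
    (h : ∀ B, O B → O' B) {T : PT Pu D} (hT : PT.ValidW P O T) : PT.ValidW P O' T := by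
  induction hT with
  | node hc _ hneg ih => exact .node hc ih fun B hB => h B (hneg B hB)

theorem exists_mem_body_of_mem_children {γ : SClause V D Pu} {v : V → D}
    {cs : List (PT Pu D ⊕ GrAtm Pu D)}
    (hmap : γ.body.map (fun l => (l.1, l.2.eval v)) = cs.map childLit)
    {c : PT Pu D ⊕ GrAtm Pu D} (hc : c ∈ cs) :
    ∃ l ∈ γ.body, (l.1, l.2.eval v) = childLit c := by
  have hmem : childLit c ∈ γ.body.map (fun l => (l.1, l.2.eval v)) :=
    hmap ▸ List.mem_map_of_mem hc
  simpa using hmem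

section Stratification

variable {P : SProg V D Pu} {σ : GrAtm Pu D → W} {A : GrAtm Pu D}
  {cs : List (PT Pu D ⊕ GrAtm Pu D)}

theorem le_of_inl_mem_children (hσ : locStratWrt σ P)
    (hrule : ∃ γ ∈ P, ∃ v, γ.constr v ∧ γ.head.eval v = A ∧
      γ.body.map (fun l => (l.1, l.2.eval v)) = cs.map childLit)
    {t : PT Pu D} (ht : Sum.inl t ∈ cs) : σ t.root ≤ σ A := by
  obtain ⟨γ, hγ, v, hcv, rfl, hmap⟩ := hrule
  obtain ⟨⟨b, a⟩, hl, hlt⟩ := exists_mem_body_of_mem_children hmap ht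
  simp only [childLit, Prod.mk.injEq] at hlt
  obtain ⟨rfl, heq⟩ := hlt
  exact heq ▸ (hσ γ hγ v hcv _ hl).1 rfl

theorem lt_of_inr_mem_children (hσ : locStratWrt σ P)
    (hrule : ∃ γ ∈ P, ∃ v, γ.constr v ∧ γ.head.eval v = A ∧
      γ.body.map (fun l => (l.1, l.2.eval v)) = cs.map childLit)
    {B : GrAtm Pu D} (hB : Sum.inr B ∈ cs) : σ B < σ A := by
  obtain ⟨γ, hγ, v, hcv, rfl, hmap⟩ := hrule
  obtain ⟨⟨b, a⟩, hl, hlt⟩ := exists_mem_body_of_mem_children hmap hB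
  simp only [childLit, Prod.mk.injEq] at hlt
  obtain ⟨rfl, heq⟩ := hlt
  exact heq ▸ (hσ γ hγ v hcv _ hl).2 rfl

theorem PT.ValidW.and_lt_of_locStratWrt (hσ : locStratWrt σ P) {O : GrAtm Pu D → Prop}
    {T : PT Pu D} (hT : PT.ValidW P O T) {β : W} (hβ : σ T.root ≤ β) :
    PT.ValidW P (fun B => O B ∧ σ B < β) T := by
  induction hT with
  | @node A cs hrule _ hneg ih =>
    exact .node hrule (fun t ht => ih t ht ((le_of_inl_mem_children hσ hrule ht).trans hβ))
      fun B hB => ⟨hneg B hB, (lt_of_inr_mem_children hσ hrule hB).trans_le hβ⟩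

theorem isStable_setOf_hasProofTree (hσ : locStratWrt σ P) :
    IsStable P {A | HasProofTree σ P A} := by
  intro A
  change HasProofTree σ P A ↔ _
  rw [HasProofTree, HasPTAux]
  constructor
  · rintro ⟨T, rfl, hT⟩
    exact ⟨T, rfl, (hT.and_lt_of_locStratWrt hσ le_rfl).mono fun B hB => hB.1 hB.2⟩
  · rintro ⟨T, hroot, hT⟩
    exact ⟨T, hroot, hT.mono fun B hB (_ : σ B < σ A) => hB⟩

theorem PT.ValidW.exists_lt_of_root_not_mem (hσ : locStratWrt σ P) {N : Set (GrAtm Pu D)}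
    (hN : isModel N P) {O : GrAtm Pu D → Prop} {T : PT Pu D} (hT : PT.ValidW P O T)
    (hroot : T.root ∉ N) : ∃ B ∈ N, O B ∧ σ B < σ T.root := by
  induction hT with
  | @node A cs hrule _ hneg ih =>
    have ⟨γ, hγ, v, hcv, hhead, hmap⟩ := hrule
    have hfalse : ∃ l ∈ γ.body, ¬ litTrue N (l.1, l.2.eval v) := by
      by_contra! hall
      exact hroot (hhead ▸ hN γ hγ v hcv hall)
    obtain ⟨l, hl, hlN⟩ := hfalse
    have hmem : (l.1, l.2.eval v) ∈ cs.map childLit := hmap ▸ List.mem_map_of_mem hl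
    obtain ⟨c, hc, hlc⟩ := List.mem_map.mp hmem
    rw [← hlc] at hlN
    cases c with
    | inl t =>
      obtain ⟨B, hBN, hOB, hlt⟩ := ih t hc (by simpa [childLit, litTrue] using hlN)
      exact ⟨B, hBN, hOB, hlt.trans_le (le_of_inl_mem_children hσ hrule hc)⟩
    | inr B =>
      exact ⟨B, by simpa [childLit, litTrue] using hlN, hneg B hc,
        lt_of_inr_mem_children hσ hrule hc⟩

theorem IsStable.pref {M : Set (GrAtm Pu D)} (hM : IsStable P M) (hσ : locStratWrt σ P)
    {N : Set (GrAtm Pu D)} (hN : isModel N P) : pref σ M N := by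
  intro A hA
  obtain ⟨T, rfl, hT⟩ := (hM A).mp hA.1
  obtain ⟨B, hBN, hBM, hlt⟩ := hT.exists_lt_of_root_not_mem hσ hN hA.2
  exact ⟨B, ⟨hBN, hBM⟩, hlt⟩

end Stratification

theorem exists_children_map_childLit {P : SProg V D Pu} {O : GrAtm Pu D → Prop} :
    ∀ {ls : List (Bool × GrAtm Pu D)},
      (∀ l ∈ ls, l.1 = true → ∃ T : PT Pu D, T.root = l.2 ∧ PT.ValidW P O T) →
      (∀ l ∈ ls, l.1 = false → O l.2) →
      ∃ cs : List (PT Pu D ⊕ GrAtm Pu D), cs.map childLit = ls ∧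
        (∀ t, Sum.inl t ∈ cs → PT.ValidW P O t) ∧ (∀ B, Sum.inr B ∈ cs → O B)
  | [], _, _ => ⟨[], rfl, by simp, by simp⟩
  | (b, A) :: ls, hpos, hneg => by
    obtain ⟨cs, hcs, hcpos, hcneg⟩ := exists_children_map_childLit
      (fun l hl => hpos l (.tail _ hl)) (fun l hl => hneg l (.tail _ hl))
    cases b with
    | true =>
      obtain ⟨T, hroot, hT⟩ := hpos _ (.head _) rfl
      refine ⟨.inl T :: cs, by simp [childLit, hroot, hcs], ?_, by simpa using hcneg⟩
      simp only [List.mem_cons, Sum.inl.injEq]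
      rintro t (rfl | ht)
      exacts [hT, hcpos t ht]
    | false =>
      refine ⟨.inr A :: cs, by simp [childLit, hcs], by simpa using hcpos, ?_⟩
      simp only [List.mem_cons, Sum.inr.injEq]
      rintro B (rfl | hB)
      exacts [hneg _ (.head _) rfl, hcneg B hB]

theorem IsStable.isModel {P : SProg V D Pu} {M : Set (GrAtm Pu D)} (hM : IsStable P M) :
    isModel M P := by
  intro γ hγ v hcv hbody
  obtain ⟨cs, hcs, hpos, hneg⟩ :=
    exists_children_map_childLit (P := P) (O := (· ∉ M))
      (ls := γ.body.map fun l => (l.1, l.2.eval v))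
      (by
        simp only [List.mem_map]
        rintro _ ⟨l, hl, rfl⟩ (h : l.1 = true)
        exact (hM _).mp (by simpa [litTrue, h] using hbody l hl))
      (by
        simp only [List.mem_map]
        rintro _ ⟨l, hl, rfl⟩ (h : l.1 = false)
        simpa [litTrue, h] using hbody l hl)
  exact (hM _).mpr ⟨.node _ cs, rfl, .node ⟨γ, hγ, v, hcv, rfl, hcs.symm⟩ hpos hneg⟩

theorem IsStable.perfectModelWrt {P : SProg V D Pu} {σ : GrAtm Pu D → W}
    {M : Set (GrAtm Pu D)} (hM : IsStable P M) (hσ : locStratWrt σ P) :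
    PerfectModelWrt σ P M :=
  ⟨hM.isModel, fun _ hN _ => hM.pref hσ hN⟩

theorem eq_of_pref_of_pref {σ : GrAtm Pu D → W} {I J : Set (GrAtm Pu D)}
    (hIJ : pref σ I J) (hJI : pref σ J I) : I = J := by
  by_contra hne
  obtain ⟨A, hA, hmin⟩ :=
    (InvImage.wf σ wellFounded_lt).has_min (symmDiff I J) (Set.symmDiff_nonempty.mpr hne)
  rcases hA with hA | hA
  · obtain ⟨B, hB, hlt⟩ := hIJ A hA
    exact hmin B (Or.inr hB) hlt
  · obtain ⟨B, hB, hlt⟩ := hJI A hA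
    exact hmin B (Or.inl hB) hlt

theorem PerfectModelWrt.eq {P : SProg V D Pu} {σ : GrAtm Pu D → W} {M N : Set (GrAtm Pu D)}
    (hM : PerfectModelWrt σ P M) (hN : PerfectModelWrt σ P N) : M = N := by
  by_contra hne
  exact hne (eq_of_pref_of_pref (hM.2 N hN.1 (Ne.symm hne)) (hN.2 M hM.1 hne))

/-- Every locally stratified constraint logic program `P` has a
unique perfect model `M(P)`: there is a `D`-interpretation `M` which is a perfect
model of `P` w.r.t. every local stratification for `P`, and for every local
stratification `σ` for `P`, `M` is the only perfect model of `P` w.r.t. `σ`. -/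
theorem unique_perfect_model {V D Pu : Type} (P : SProg V D Pu) (hfin : P.Finite)
    (hls : LocallyStratified P) :
    ∃ M : Set (GrAtm Pu D),
      (∀ σ : GrAtm Pu D → W, locStratWrt σ P → PerfectModelWrt σ P M) ∧
      (∀ (σ : GrAtm Pu D → W) (N : Set (GrAtm Pu D)),
        locStratWrt σ P → PerfectModelWrt σ P N → N = M) := by
  obtain ⟨σ₀, hσ₀⟩ := hls
  have hstable : IsStable P {A | HasProofTree σ₀ P A} := isStable_setOf_hasProofTree hσ₀
  have hperfect : ∀ σ, locStratWrt σ P → PerfectModelWrt σ P {A | HasProofTree σ₀ P A} :=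
    fun σ hσ => hstable.perfectModelWrt hσ
  exact ⟨_, hperfect, fun σ N hσ hN => hN.eq (hperfect σ hσ)⟩

end CLP
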